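/- Let G be a group with a factorial automatic structure L₁ ⊆ A* for π₁ : A* → G and an automatic structure L₂ ⊆ B* for π₂ : B* → G, and let φ be an endomorphism of G such that the FT-BRP holds for (φ, L₁, L₂). Then the BRP holds for (φ, L₁, L₂). -/

import Mathlib

open scoped NNReal

namespace Auto

/-- The generating set `Aπ ∪ (Aπ)⁻¹` of `G` determined by `π : A* → G`. -/
def gens {A G : Type*} [Group G] (π : FreeMonoid A →* G) : Set G :=
  (Set.range fun a : A => π (FreeMonoid.of a)) ∪
    Set.range fun a : A => (π (FreeMonoid.of a))⁻¹

/-- The word metric `d_A` on `G`: the least `n` such that `g⁻¹h` is a product of `n`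
elements of `Aπ ∪ (Aπ)⁻¹`. -/
noncomputable def wdist {A G : Type*} [Group G] (π : FreeMonoid A →* G) (g h : G) : ℕ :=
  sInf {n : ℕ | ∃ l : List G, l.length = n ∧ (∀ x ∈ l, x ∈ gens π) ∧ l.prod = g⁻¹ * h}

/-- Evaluation of a word of `A*` in `G`. -/
def evalW {A G : Type*} [Group G] (π : FreeMonoid A →* G) (w : List A) : G :=
  π (FreeMonoid.ofList w)

/-- `u` and `v` `p`-fellow travel: `d_A(u^[n]π, v^[n]π) ≤ p` for all `n`. -/
def FellowTravel {A G : Type*} [Group G] (π : FreeMonoid A →* G) (p : ℝ≥0)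
    (u v : List A) : Prop :=
  ∀ n : ℕ, (wdist π (evalW π (u.take n)) (evalW π (v.take n)) : ℝ≥0) ≤ p

/-- `u` and `v` are `p`-meeting-fellow-travellers. -/
def MFT {A G : Type*} [Group G] (π : FreeMonoid A →* G) (p : ℝ≥0) (u v : List A) : Prop :=
  FellowTravel π p u v ∧ evalW π u = evalW π v

/-- A language is regular if it is accepted by a finite-state automaton. -/
def IsRegular {A : Type*} (L : Language A) : Prop :=
  ∃ (σ : Type) (_ : Fintype σ) (M : DFA A σ), M.accepts = L

/-- `L` is an automatic structure for `π`. -/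
structure IsAutomaticStructure {A G : Type*} [Group G] (π : FreeMonoid A →* G)
    (L : Language A) : Prop where
  regular : IsRegular L
  onto : ∀ g : G, ∃ w ∈ L, evalW π w = g
  ft : ∃ N : ℕ, ∀ u ∈ L, ∀ v ∈ L,
    wdist π (evalW π u) (evalW π v) ≤ 1 → FellowTravel π N u v

/-- Evaluation of an element of `A ∪ {ε}`. -/
def evalOpt {A G : Type*} [Group G] (π : FreeMonoid A →* G) : Option A → G
  | none => 1
  | some a => π (FreeMonoid.of a)

/-- `L` is a biautomatic structure for `π`. -/
structure IsBiautomaticStructure {A G : Type*} [Group G] (π : FreeMonoid A →* G)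
    (L : Language A) extends IsAutomaticStructure π L : Prop where
  bi : ∃ N : ℕ, ∀ u ∈ L, ∀ v ∈ L, ∀ a : Option A,
    evalW π v = evalOpt π a * evalW π u →
    ∀ n : ℕ, wdist π (evalOpt π a * evalW π (u.take n)) (evalW π (v.take n)) ≤ N

/-- A language is factorial if it is closed under taking factors. -/
def IsFactorial {A : Type*} (L : Language A) : Prop :=
  ∀ u ∈ L, ∀ v : List A, v <:+: u → v ∈ L

/-- `D : ℝ≥0 → ℝ≥0` is a departure function for `(G, L)`. -/
def IsDepartureFunction {A G : Type*} [Group G] (π : FreeMonoid A →* G) (L : Language A)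
    (D : ℝ≥0 → ℝ≥0) : Prop :=
  ∀ w ∈ L, ∀ r : ℝ≥0, ∀ s t : ℕ, D r ≤ (t : ℝ≥0) → s + t ≤ w.length →
    r < (wdist π (evalW π (w.take s)) (evalW π (w.take (s + t))) : ℝ≥0)

/-- Every point of `S` is within distance `N` of `T`. -/
def NbhdIn {A G : Type*} [Group G] (π : FreeMonoid A →* G) (N : ℕ) (S T : Set G) : Prop :=
  ∀ s ∈ S, ∃ t ∈ T, wdist π s t ≤ N

/-- The Hausdorff distance between `S` and `T` is at most `N`. -/
def HausdorffLE {A G : Type*} [Group G] (π : FreeMonoid A →* G) (N : ℕ)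
    (S T : Set G) : Prop :=
  NbhdIn π N S T ∧ NbhdIn π N T S

/-- `H` is an `L`-quasiconvex subgroup of `G`. -/
def IsQuasiconvex {A G : Type*} [Group G] (π : FreeMonoid A →* G) (L : Language A)
    (H : Subgroup G) : Prop :=
  ∃ k : ℕ, ∀ h ∈ H, ∀ h' ∈ H, ∀ w ∈ L, h * evalW π w = h' →
    ∀ n : ℕ, ∃ z ∈ H, wdist π (h * evalW π (w.take n)) z ≤ k

/-- The bounded reduction property for `(φ, L, L')`. -/
def BRP {A B G G' : Type*} [Group G] [Group G'] (π : FreeMonoid A →* G)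
    (π' : FreeMonoid B →* G') (φ : G →* G') (L : Language A) (L' : Language B) : Prop :=
  ∃ N : ℕ, ∀ x : G, ∀ α ∈ L, ∀ β ∈ L', evalW π' β = φ (evalW π α) →
    HausdorffLE π' N (Set.range fun n : ℕ => φ (x * evalW π (α.take n)))
      (Set.range fun n : ℕ => φ x * evalW π' (β.take n))

/-- The synchronous bounded reduction property for `(φ, L, L')`. -/
def SyncBRP {A B G G' : Type*} [Group G] [Group G'] (π : FreeMonoid A →* G)
    (π' : FreeMonoid B →* G') (φ : G →* G') (L : Language A) (L' : Language B) : Prop :=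
  ∃ N : ℕ, ∀ x : G, ∀ α ∈ L, ∀ β ∈ L', evalW π' β = φ (evalW π α) →
    ∀ n : ℕ, wdist π' (φ (x * evalW π (α.take n))) (φ x * evalW π' (β.take n)) ≤ N

/-- The fellow traveller bounded reduction property (FT-BRP) for `(φ, L, L')`. -/
def FTBRP {A B G G' : Type*} [Group G] [Group G'] (π : FreeMonoid A →* G)
    (π' : FreeMonoid B →* G') (φ : G →* G') (L : Language A) (L' : Language B) : Prop :=
  ∀ p : ℝ≥0, ∃ q : ℝ≥0,
    ∀ u₁ ∈ L, ∀ u₂ ∈ L, ∀ u₃ ∈ L, ∀ u₁' ∈ L', ∀ u₂' ∈ L', ∀ u₃' ∈ L',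
      evalW π' u₁' = φ (evalW π u₁) → evalW π' u₂' = φ (evalW π u₂) →
        evalW π' u₃' = φ (evalW π u₃) →
          MFT π p (u₁ ++ u₂) u₃ → MFT π' q (u₁' ++ u₂') u₃'

/-- The natural homomorphism `(A ⊔ B)* → G` agreeing with `π₁` on `A` and `π₂` on `B`. -/
def sumHom {A B G : Type*} [Group G] (π₁ : FreeMonoid A →* G) (π₂ : FreeMonoid B →* G) :
    FreeMonoid (A ⊕ B) →* G :=
  FreeMonoid.lift (Sum.elim (fun a => π₁ (FreeMonoid.of a)) fun b => π₂ (FreeMonoid.of b))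

/-- The union `L₁ ∪ L₂` viewed as a language over `A ⊔ B`. -/
def unionLang {A B : Type*} (L₁ : Language A) (L₂ : Language B) : Language (A ⊕ B) :=
  {w : List (A ⊕ B) | (∃ u ∈ L₁, w = u.map Sum.inl) ∨ ∃ v ∈ L₂, w = v.map Sum.inr}

/-- `L` is an asynchronous automatic structure for `π`. -/
def IsAsyncAutomaticStructure {A G : Type*} [Group G] (π : FreeMonoid A →* G)
    (L : Language A) : Prop :=
  IsRegular L ∧ (∀ g : G, ∃ w ∈ L, evalW π w = g) ∧
    ∃ p : ℕ, ∀ u ∈ L, ∀ v ∈ L, wdist π (evalW π u) (evalW π v) ≤ 1 →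
      ∃ φ ψ : ℕ → ℕ, Monotone φ ∧ Monotone ψ ∧
        Function.Surjective φ ∧ Function.Surjective ψ ∧
          ∀ t : ℕ, wdist π (evalW π (u.take (φ t))) (evalW π (v.take (ψ t))) ≤ p

/-- `L₁` and `L₂` are equivalent automatic structures. -/
def LangEquivalent {A B G : Type*} [Group G] (π₁ : FreeMonoid A →* G)
    (π₂ : FreeMonoid B →* G) (L₁ : Language A) (L₂ : Language B) : Prop :=
  IsAsyncAutomaticStructure (sumHom π₁ π₂) (unionLang L₁ L₂)

/-- `L₁` and `L₂` are synchronously equivalent automatic structures. -/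
def LangSyncEquivalent {A B G : Type*} [Group G] (π₁ : FreeMonoid A →* G)
    (π₂ : FreeMonoid B →* G) (L₁ : Language A) (L₂ : Language B) : Prop :=
  IsAutomaticStructure (sumHom π₁ π₂) (unionLang L₁ L₂)

/-- `L` has the Hausdorff closeness property. -/
def HausClose {A G : Type*} [Group G] (π : FreeMonoid A →* G) (L : Language A) : Prop :=
  ∃ N : ℕ, ∀ u ∈ L, ∀ v ∈ L, wdist π (evalW π u) (evalW π v) ≤ 1 →
    HausdorffLE π N (Set.range fun n : ℕ => evalW π (u.take n))
      (Set.range fun n : ℕ => evalW π (v.take n))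

/-- The padded alphabet `C = (A×B) ∪ (A×{$}) ∪ ({$}×B)` of convolution. -/
abbrev ConvAlphabet (A B : Type*) := (A × B) ⊕ (A ⊕ B)

/-- The convolution `u ⋄ v` of two words. -/
def conv {A B : Type*} : List A → List B → List (ConvAlphabet A B)
  | [], [] => []
  | [], b :: v => Sum.inr (Sum.inr b) :: conv [] v
  | a :: u, [] => Sum.inr (Sum.inl a) :: conv u []
  | a :: u, b :: v => Sum.inl (a, b) :: conv u v
  termination_by u v => u.length + v.length

/-- The convolution `L₁ ⋄ L₂` of two languages. -/
def convLang {A B : Type*} (L₁ : Language A) (L₂ : Language B) :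
    Language (ConvAlphabet A B) :=
  {w : List (ConvAlphabet A B) | ∃ u ∈ L₁, ∃ v ∈ L₂, w = conv u v}

/-- The natural homomorphism `C* → G × G'` for the convolution alphabet. -/
def convHom {A B G G' : Type*} [Group G] [Group G'] (π₁ : FreeMonoid A →* G)
    (π₂ : FreeMonoid B →* G') : FreeMonoid (ConvAlphabet A B) →* G × G' :=
  FreeMonoid.lift fun c =>
    match c with
    | Sum.inl (a, b) => (π₁ (FreeMonoid.of a), π₂ (FreeMonoid.of b))
    | Sum.inr (Sum.inl a) => (π₁ (FreeMonoid.of a), 1)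
    | Sum.inr (Sum.inr b) => (1, π₂ (FreeMonoid.of b))

/-- A group is automatic if it admits an automatic structure over some finite alphabet. -/
def IsAutomaticGroup (G : Type*) [Group G] : Prop :=
  ∃ (A : Type) (_ : Fintype A) (π : FreeMonoid A →* G) (L : Language A),
    IsAutomaticStructure π L

end Auto

open Auto

/-
Apply the FT-BRP with `p = 0` to exact factorizations of `α ∈ L₁` (the factors stay in `L₁`
by factoriality), with arbitrary `L₂`-representatives `γₙ, δₙ` of the images of `α^[n]` and of
the rest of `α`. Then `γₙδₙ` fellow travels `β`, so the image of `α^[n]` is close to the prefix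
of `β` of length `|γₙ|`. Splitting `α^[n+1]` as `α^[n]` and one letter shows that `γₙ₊₁`
fellow travels `γₙ` followed by a word of bounded length. So for the prefix of `β` of length
`m`, the last `n ≤ |α|` with `|γₙ| ≤ m` gives a close image point: either `n = |α|`, where
`δₙ` represents `1`, or `|γₙ| ≤ m < |γₙ₊₁|`.
-/

theorem Nat.exists_apply_le_lt_apply_succ (f : ℕ → ℕ) (N : ℕ) {m : ℕ} (h₀ : f 0 ≤ m) :
    ∃ n, f n ≤ m ∧ (n = N ∨ m < f (n + 1)) := by
  refine ⟨Nat.findGreatest (f · ≤ m) N, Nat.findGreatest_spec (P := (f · ≤ m)) N.zero_le h₀, ?_⟩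
  rcases (Nat.findGreatest_le (P := (f · ≤ m)) N).eq_or_lt with h | h
  · exact .inl h
  · exact .inr <| not_le.mp <|
      Nat.findGreatest_is_greatest (P := (f · ≤ m)) (Nat.lt_succ_self _) h

namespace Auto

section WordMetric

variable {B G : Type*} [Group G] (π : FreeMonoid B →* G)

@[simp]
theorem evalW_nil : evalW π [] = 1 :=
  map_one π

@[simp]
theorem evalW_append (u v : List B) : evalW π (u ++ v) = evalW π u * evalW π v :=
  map_mul π _ _

theorem evalW_eq_prod (w : List B) : evalW π w = (w.map fun b => π (FreeMonoid.of b)).prod := by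
  conv_lhs => rw [evalW, ← FreeMonoid.lift_restrict π]
  exact FreeMonoid.lift_ofList _ _

theorem evalW_take_one (w : List B) : evalW π (w.take 1) = evalOpt π w.head? := by
  cases w <;> simp [evalW, evalOpt]

theorem IsAutomaticStructure.surjective {L : Language B} (h : IsAutomaticStructure π L) :
    Function.Surjective π := fun g =>
  let ⟨w, _, hw⟩ := h.onto g
  ⟨FreeMonoid.ofList w, hw⟩

theorem forall_mem_map_of_mem_gens (w : List B) :
    ∀ x ∈ w.map fun b => π (FreeMonoid.of b), x ∈ gens π := by
  simp only [List.mem_map]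
  rintro _ ⟨b, -, rfl⟩
  exact Or.inl ⟨b, rfl⟩

theorem wdist_le_length {g h : G} (l : List G) (hl : ∀ x ∈ l, x ∈ gens π)
    (hprod : l.prod = g⁻¹ * h) : wdist π g h ≤ l.length :=
  Nat.sInf_le ⟨l, rfl, hl, hprod⟩

@[simp]
theorem wdist_self (g : G) : wdist π g g = 0 :=
  Nat.le_zero.mp (by simpa using wdist_le_length π [] (by simp) (by simp))

@[simp]
theorem wdist_mul_left (x g h : G) : wdist π (x * g) (x * h) = wdist π g h := by
  simp only [wdist, mul_inv_rev, mul_assoc, inv_mul_cancel_left]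

theorem wdist_evalW_append_le (u v : List B) :
    wdist π (evalW π u) (evalW π (u ++ v)) ≤ v.length := by
  rw [evalW_append, ← wdist_mul_left π (evalW π u)⁻¹, inv_mul_cancel, inv_mul_cancel_left,
    ← List.length_map (f := fun b => π (FreeMonoid.of b))]
  exact wdist_le_length π _ (forall_mem_map_of_mem_gens π v)
    (by rw [inv_one, one_mul, evalW_eq_prod])

theorem wdist_evalW_take_append_le {u : List B} (v : List B) {m : ℕ} (hm : u.length ≤ m) :
    wdist π (evalW π u) (evalW π ((u ++ v).take m)) ≤ v.length := by
  rw [List.take_append, List.take_of_length_le hm]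
  exact (wdist_evalW_append_le π u _).trans (List.length_take_le' _ _)

variable {π}

theorem exists_list_length_eq_wdist (hπ : Function.Surjective π) (g h : G) :
    ∃ l : List G, l.length = wdist π g h ∧ (∀ x ∈ l, x ∈ gens π) ∧ l.prod = g⁻¹ * h := by
  obtain ⟨w, hw⟩ := hπ (g⁻¹ * h)
  have hmem : (w.toList.map fun b => π (FreeMonoid.of b)).length ∈
      {n : ℕ | ∃ l : List G, l.length = n ∧ (∀ x ∈ l, x ∈ gens π) ∧ l.prod = g⁻¹ * h} :=
    ⟨_, rfl, forall_mem_map_of_mem_gens π _, (evalW_eq_prod π w.toList).symm.trans hw⟩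
  exact Nat.sInf_mem ⟨_, hmem⟩

theorem wdist_comm (hπ : Function.Surjective π) (g h : G) : wdist π g h = wdist π h g := by
  suffices key : ∀ g h : G, wdist π h g ≤ wdist π g h from le_antisymm (key h g) (key g h)
  intro g h
  obtain ⟨l, hlen, hl, hprod⟩ := exists_list_length_eq_wdist hπ g h
  rw [← hlen, ← List.length_map (f := fun x : G => x⁻¹), ← List.length_reverse]
  refine wdist_le_length π _ ?_ (by rw [← List.prod_inv_reverse, hprod, mul_inv_rev, inv_inv])
  simp only [List.mem_reverse, List.mem_map]
  rintro _ ⟨x, hx, rfl⟩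
  rcases hl x hx with ⟨b, rfl⟩ | ⟨b, rfl⟩
  exacts [Or.inr ⟨b, rfl⟩, Or.inl ⟨b, (inv_inv _).symm⟩]

theorem wdist_triangle (hπ : Function.Surjective π) (g h k : G) :
    wdist π g k ≤ wdist π g h + wdist π h k := by
  obtain ⟨l₁, hlen₁, hl₁, hprod₁⟩ := exists_list_length_eq_wdist hπ g h
  obtain ⟨l₂, hlen₂, hl₂, hprod₂⟩ := exists_list_length_eq_wdist hπ h k
  rw [← hlen₁, ← hlen₂, ← List.length_append]
  refine wdist_le_length π _ (fun x hx => (List.mem_append.mp hx).elim (hl₁ x) (hl₂ x)) ?_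
  rw [List.prod_append, hprod₁, hprod₂, mul_assoc, mul_inv_cancel_left]

end WordMetric

theorem hausdorffLE_range_mul_left_iff {B G : Type*} [Group G] (π : FreeMonoid B →* G) (N : ℕ)
    (x : G) (f g : ℕ → G) :
    HausdorffLE π N (Set.range fun n => x * f n) (Set.range fun n => x * g n) ↔
      (∀ i, ∃ j, wdist π (f i) (g j) ≤ N) ∧ ∀ j, ∃ i, wdist π (g j) (f i) ≤ N := by
  simp [HausdorffLE, NbhdIn]

theorem FTBRP.exists_wdist_take_le {A B G G' : Type*} [Group G] [Group G']
    {π₁ : FreeMonoid A →* G} {π₂ : FreeMonoid B →* G'} {φ : G →* G'}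
    {L₁ : Language A} {L₂ : Language B} (hft : FTBRP π₁ π₂ φ L₁ L₂) (hfac : IsFactorial L₁) :
    ∃ q : ℕ, ∀ u₁ u₂ : List A, u₁ ++ u₂ ∈ L₁ → ∀ u₁' ∈ L₂, ∀ u₂' ∈ L₂, ∀ u₃' ∈ L₂,
      evalW π₂ u₁' = φ (evalW π₁ u₁) → evalW π₂ u₂' = φ (evalW π₁ u₂) →
        evalW π₂ u₃' = φ (evalW π₁ (u₁ ++ u₂)) →
          ∀ n, wdist π₂ (evalW π₂ ((u₁' ++ u₂').take n)) (evalW π₂ (u₃'.take n)) ≤ q := by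
  obtain ⟨q, hq⟩ := hft 0
  refine ⟨⌈q⌉₊, fun u₁ u₂ hu u₁' hu₁' u₂' hu₂' u₃' hu₃' h₁ h₂ h₃ n => ?_⟩
  have hmft : MFT π₁ 0 (u₁ ++ u₂) (u₁ ++ u₂) := ⟨fun n => by simp, rfl⟩
  have := (hq u₁ (hfac _ hu _ (List.prefix_append _ _).isInfix)
    u₂ (hfac _ hu _ (List.suffix_append _ _).isInfix) _ hu
    u₁' hu₁' u₂' hu₂' u₃' hu₃' h₁ h₂ h₃ hmft).1 n
  exact_mod_cast this.trans (Nat.le_ceil q)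

section Chain

variable {B G : Type*} [Group G] {π : FreeMonoid B →* G}

theorem exists_wdist_evalW_take_le_of_chain (hπ : Function.Surjective π)
    {β : List B} {γ δ ρ : ℕ → List B} {N q R ℓ : ℕ}
    (hβ : ∀ n m, wdist π (evalW π ((γ n ++ δ n).take m)) (evalW π (β.take m)) ≤ q)
    (hstep : ∀ n m, wdist π (evalW π ((γ n ++ ρ n).take m)) (evalW π ((γ (n + 1)).take m)) ≤ q)
    (hρ : ∀ n, (ρ n).length ≤ R) (hγ₀ : (γ 0).length ≤ ℓ) (hδ : (δ N).length ≤ ℓ) (m : ℕ) :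
    ∃ n, wdist π (evalW π (β.take m)) (evalW π (γ n)) ≤ 2 * q + R + ℓ := by
  set Q := evalW π (β.take m)
  have hQ : ∀ n, wdist π Q (evalW π ((γ n ++ δ n).take m)) ≤ q := fun n =>
    wdist_comm hπ _ _ ▸ hβ n m
  by_cases h₀ : (γ 0).length ≤ m
  swap
  · have hX : (γ 0 ++ δ 0).take m = (γ 0).take m := List.take_append_of_le_length (by omega)
    have hP := wdist_evalW_append_le π ((γ 0).take m) ((γ 0).drop m)
    rw [List.take_append_drop, List.length_drop] at hP
    refine ⟨0, calc
      _ ≤ wdist π Q (evalW π ((γ 0).take m)) + wdist π (evalW π ((γ 0).take m)) (evalW π (γ 0)) :=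
        wdist_triangle hπ _ _ _
      _ ≤ q + ((γ 0).length - m) := add_le_add (hX ▸ hQ 0) hP
      _ ≤ 2 * q + R + ℓ := by omega⟩
  obtain ⟨n, hn, rfl | hnext⟩ := Nat.exists_apply_le_lt_apply_succ (fun n => (γ n).length) N h₀
  · refine ⟨n, calc
      _ ≤ wdist π Q (evalW π ((γ n ++ δ n).take m)) +
          wdist π (evalW π ((γ n ++ δ n).take m)) (evalW π (γ n)) := wdist_triangle hπ _ _ _
      _ ≤ q + ℓ := add_le_add (hQ n)
        (wdist_comm hπ _ _ ▸ (wdist_evalW_take_append_le π (δ n) hn).trans hδ)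
      _ ≤ 2 * q + R + ℓ := by omega⟩
  · set Y := evalW π ((γ (n + 1)).take m)
    set Z := evalW π ((γ n ++ ρ n).take m)
    have hY : wdist π Q Y ≤ q := by
      simpa only [List.take_append_of_le_length hnext.le] using hQ (n + 1)
    refine ⟨n, calc
      _ ≤ wdist π Q Y + (wdist π Y Z + wdist π Z (evalW π (γ n))) :=
        (wdist_triangle hπ _ Y _).trans (add_le_add_right (wdist_triangle hπ _ _ _) _)
      _ ≤ q + (q + R) := add_le_add hY (add_le_add (wdist_comm hπ Z Y ▸ hstep n m)
        (wdist_comm hπ _ _ ▸ (wdist_evalW_take_append_le π (ρ n) hn).trans (hρ n)))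
      _ ≤ 2 * q + R + ℓ := by omega⟩

theorem hausdorffLE_of_chain (hπ : Function.Surjective π) {P : ℕ → G}
    {β : List B} {γ δ ρ : ℕ → List B} {N q R ℓ : ℕ} (hγ : ∀ n, evalW π (γ n) = P n)
    (hβ : ∀ n m, wdist π (evalW π ((γ n ++ δ n).take m)) (evalW π (β.take m)) ≤ q)
    (hstep : ∀ n m, wdist π (evalW π ((γ n ++ ρ n).take m)) (evalW π ((γ (n + 1)).take m)) ≤ q)
    (hρ : ∀ n, (ρ n).length ≤ R) (hγ₀ : (γ 0).length ≤ ℓ) (hδ : (δ N).length ≤ ℓ) (x : G) :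
    HausdorffLE π (2 * q + R + ℓ) (Set.range fun n => x * P n)
      (Set.range fun m => x * evalW π (β.take m)) := by
  rw [hausdorffLE_range_mul_left_iff]
  refine ⟨fun n => ⟨(γ n).length, ?_⟩, fun m => ?_⟩
  · have := hβ n (γ n).length
    rw [List.take_left, hγ] at this
    omega
  · simpa only [hγ] using exists_wdist_evalW_take_le_of_chain hπ hβ hstep hρ hγ₀ hδ m

end Chain

end Auto

theorem ftbrp_implies_brp_general {A B G : Type*} [Fintype A] [Group G]
    (π₁ : FreeMonoid A →* G) (π₂ : FreeMonoid B →* G)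
    (L₁ : Language A) (L₂ : Language B) (hfac : IsFactorial L₁)
    (h₂ : IsAutomaticStructure π₂ L₂)
    (φ : G →* G) (hft : FTBRP π₁ π₂ φ L₁ L₂) :
    BRP π₁ π₂ φ L₁ L₂ := by
  obtain ⟨q, hq⟩ := hft.exists_wdist_take_le hfac
  choose rep hrepL hrepE using h₂.onto
  set R := Finset.univ.sup fun a : Option A => (rep (φ (evalOpt π₁ a))).length
  refine ⟨2 * q + R + (rep 1).length, fun x α hα β hβ hαβ => ?_⟩
  have htake : ∀ n, α.take n ++ (α.drop n).take 1 = α.take (n + 1) := fun n =>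
    List.take_add.symm
  simp only [map_mul]
  refine hausdorffLE_of_chain h₂.surjective (N := α.length) (R := R) (ℓ := (rep 1).length)
    (γ := fun n => rep (φ (evalW π₁ (α.take n)))) (δ := fun n => rep (φ (evalW π₁ (α.drop n))))
    (ρ := fun n => rep (φ (evalOpt π₁ (α.drop n).head?))) (fun n => hrepE _)
    (fun n => hq _ _ (by rwa [List.take_append_drop]) _ (hrepL _) _ (hrepL _) β hβ (hrepE _)
      (hrepE _) (by rwa [List.take_append_drop]))
    (fun n => hq _ _ (by rw [htake]; exact hfac α hα _ (List.take_prefix _ _).isInfix)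
      _ (hrepL _) _ (hrepL _) _ (hrepL _) (hrepE _) (by rw [hrepE, evalW_take_one])
      (by rw [hrepE, htake]))
    (fun n => Finset.le_sup (f := fun a => (rep (φ (evalOpt π₁ a))).length) (Finset.mem_univ _))
    (by simp) (by simp) (φ x)

/-- For a factorial automatic structure `L₁` and an automatic structure `L₂`,
the FT-BRP for `(φ, L₁, L₂)` implies the BRP for `(φ, L₁, L₂)`. -/
theorem ftbrp_implies_brp {A B G : Type*} [Fintype A] [Fintype B] [Group G]
    (π₁ : FreeMonoid A →* G) (π₂ : FreeMonoid B →* G)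
    (L₁ : Language A) (L₂ : Language B)
    (h₁ : IsAutomaticStructure π₁ L₁) (hfac : IsFactorial L₁)
    (h₂ : IsAutomaticStructure π₂ L₂)
    (φ : G →* G) (hft : FTBRP π₁ π₂ φ L₁ L₂) :
    BRP π₁ π₂ φ L₁ L₂ :=
  ftbrp_implies_brp_general π₁ π₂ L₁ L₂ hfac h₂ φ hft
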